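/- For all integers t ≥ 0 and ℓ ∈ {1,2,3}, the matching polynomial of the graph L(t,ℓ) is μ(L(t,ℓ),x) = x^t (x⁴ − (t+ℓ+3)x² + 3t + ℓ). -/

import Mathlib

/-!
Every edge of `L(t,ℓ)` is one of the three triangle edges or one of the `t + ℓ` edges at the
hub `u`. Two triangle edges always meet, and so do two hub edges, so a matching has at most two
edges, and a 2-matching is a triangle edge together with a disjoint hub edge: for each of the `ℓ`
hub edges into the triangle only the opposite triangle edge qualifies, for each of the `t` pendant
hub edges all three do. Hence `m(L,1) = t + ℓ + 3`, `m(L,2) = 3t + ℓ` and `m(L,k) = 0` for `k ≥ 3`.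
-/

open Polynomial

/-- The graph obtained from `G` by deleting the vertex `u` and all incident edges. -/
def SimpleGraph.deleteVertex {V : Type*} (G : SimpleGraph V) (u : V) :
    SimpleGraph {v : V // v ≠ u} where
  Adj a b := G.Adj a b
  symm := ⟨fun _ _ h => G.adj_symm h⟩
  loopless := ⟨fun a h => G.loopless.irrefl a h⟩

/-- `s` is a matching in `G`: a set of edges of `G` that are pairwise non-incident. -/
def SimpleGraph.IsMatchingFinset {V : Type*} (G : SimpleGraph V) (s : Finset (Sym2 V)) : Prop :=
  ↑s ⊆ G.edgeSet ∧ (s : Set (Sym2 V)).Pairwise fun e f => ∀ v ∈ e, v ∉ f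

/-- `m(G,k)`: the number of `k`-matchings in `G`. -/
noncomputable def SimpleGraph.numMatchings {V : Type*} (G : SimpleGraph V) (k : ℕ) : ℕ :=
  {s : Finset (Sym2 V) | s.card = k ∧ G.IsMatchingFinset s}.ncard

/-- The matching polynomial `μ(G,x) = ∑_k (-1)^k m(G,k) x^(n-2k)`. -/
noncomputable def SimpleGraph.matchingPolynomial {V : Type*} [Fintype V] (G : SimpleGraph V) :
    Polynomial ℝ :=
  ∑ k ∈ Finset.range (Fintype.card V + 1),
    C ((-1 : ℝ) ^ k * (G.numMatchings k : ℝ)) * X ^ (Fintype.card V - 2 * k)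

/-- The graph `L(t,ℓ)`: a triangle `K₃` on the vertices `some (Sum.inl _)`, `t` further vertices
`some (Sum.inr i)`, and an extra vertex `none` adjacent to exactly the first `ℓ` vertices of the
triangle and to all `t` further vertices. -/
def LGraph (t ℓ : ℕ) : SimpleGraph (Option (Fin 3 ⊕ Fin t)) :=
  SimpleGraph.fromRel fun x y =>
    (∃ a b : Fin 3, a ≠ b ∧ x = some (Sum.inl a) ∧ y = some (Sum.inl b)) ∨
    (∃ a : Fin 3, (a : ℕ) < ℓ ∧ x = none ∧ y = some (Sum.inl a)) ∨
    (∃ i : Fin t, x = none ∧ y = some (Sum.inr i))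

namespace SimpleGraph

variable {V : Type*} (G : SimpleGraph V)

theorem isMatchingFinset_singleton {e : Sym2 V} : G.IsMatchingFinset {e} ↔ e ∈ G.edgeSet := by
  simp [IsMatchingFinset]

theorem isMatchingFinset_pair [DecidableEq V] {e f : Sym2 V} (hef : e ≠ f) :
    G.IsMatchingFinset {e, f} ↔ e ∈ G.edgeSet ∧ f ∈ G.edgeSet ∧ ∀ v ∈ e, v ∉ f := by
  simp only [IsMatchingFinset, Finset.coe_pair, Set.insert_subset_iff,
    Set.singleton_subset_iff, Set.pairwise_pair]
  constructor
  · rintro ⟨⟨he, hf⟩, hdisj⟩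
    exact ⟨he, hf, (hdisj hef).1⟩
  · rintro ⟨he, hf, hdisj⟩
    exact ⟨⟨he, hf⟩, fun _ => ⟨hdisj, fun v hvf hve => hdisj v hve hvf⟩⟩

theorem numMatchings_zero : G.numMatchings 0 = 1 := by
  have : {s : Finset (Sym2 V) | s.card = 0 ∧ G.IsMatchingFinset s} = {∅} := by
    ext s
    simp only [Set.mem_ofPred_eq, Set.mem_singleton_iff, Finset.card_eq_zero,
      and_iff_left_iff_imp]
    rintro rfl
    simp [IsMatchingFinset]
  rw [numMatchings, this, Set.ncard_singleton]

theorem numMatchings_one : G.numMatchings 1 = G.edgeSet.ncard := by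
  have : {s : Finset (Sym2 V) | s.card = 1 ∧ G.IsMatchingFinset s} =
      (fun e => {e}) '' G.edgeSet := by
    ext s
    simp only [Set.mem_ofPred_eq, Set.mem_image, Finset.card_eq_one]
    constructor
    · rintro ⟨⟨e, rfl⟩, hs⟩
      exact ⟨e, (G.isMatchingFinset_singleton).1 hs, rfl⟩
    · rintro ⟨e, he, rfl⟩
      exact ⟨⟨e, rfl⟩, (G.isMatchingFinset_singleton).2 he⟩
  rw [numMatchings, this, Set.ncard_image_of_injective _ Finset.singleton_injective]

theorem numMatchings_eq_zero {k : ℕ} (h : ∀ s, G.IsMatchingFinset s → s.card < k) :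
    G.numMatchings k = 0 := by
  have : {s : Finset (Sym2 V) | s.card = k ∧ G.IsMatchingFinset s} = ∅ :=
    Set.eq_empty_of_forall_notMem fun s ⟨hk, hs⟩ => (h s hs).ne hk
  rw [numMatchings, this, Set.ncard_empty]

theorem matchingPolynomial_eq_of_card_le_two [Fintype V] (hV : 4 ≤ Fintype.card V)
    (h : ∀ s, G.IsMatchingFinset s → s.card ≤ 2) :
    G.matchingPolynomial = X ^ (Fintype.card V - 4) *
      (X ^ 4 - C (G.numMatchings 1 : ℝ) * X ^ 2 + C (G.numMatchings 2 : ℝ)) := by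
  obtain ⟨n, hn⟩ := Nat.exists_eq_add_of_le' hV
  have hvanish : ∀ k ∈ Finset.range (Fintype.card V + 1), k ∉ Finset.range 3 →
      C ((-1 : ℝ) ^ k * (G.numMatchings k : ℝ)) * X ^ (Fintype.card V - 2 * k) = 0 := by
    intro k _ hk
    rw [G.numMatchings_eq_zero fun s hs => (h s hs).trans_lt (by simp at hk; omega)]
    simp
  rw [matchingPolynomial, ← Finset.sum_subset (Finset.range_subset_range.2 (by omega)) hvanish]
  simp only [Finset.sum_range_succ, Finset.sum_range_zero, numMatchings_zero, hn]
  simp only [show n + 4 - 2 * 0 = n + 4 by omega, show n + 4 - 2 * 1 = n + 2 by omega,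
    show n + 4 - 2 * 2 = n by omega, pow_add, Nat.cast_one, C_mul, map_neg, map_one, map_pow]
  ring

end SimpleGraph

namespace LGraph

open Sum SimpleGraph

variable {t ℓ : ℕ}

def triEdge (t : ℕ) (a : Fin 3) : Sym2 (Option (Fin 3 ⊕ Fin t)) :=
  s(some (inl a), some (inl (a + 1)))

def hubEdge (t : ℕ) (w : Fin 3 ⊕ Fin t) : Sym2 (Option (Fin 3 ⊕ Fin t)) := s(none, some w)

theorem card_vertices : Fintype.card (Option (Fin 3 ⊕ Fin t)) = t + 4 := by
  simp only [Fintype.card_option, Fintype.card_sum, Fintype.card_fin]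
  omega

theorem none_notMem_triEdge (a : Fin 3) : none ∉ triEdge t a := by
  simp [triEdge]

theorem none_mem_hubEdge (w : Fin 3 ⊕ Fin t) : none ∈ hubEdge t w := Sym2.mem_mk_left _ _

theorem triEdge_ne_hubEdge (a : Fin 3) (w : Fin 3 ⊕ Fin t) : triEdge t a ≠ hubEdge t w :=
  fun h => none_notMem_triEdge a (h ▸ none_mem_hubEdge w)

theorem triEdge_injective : Function.Injective (triEdge t) := by
  intro a b h
  have : ∀ a b : Fin 3, a = b ∨ a = b + 1 ∧ a + 1 = b → a = b := by decide
  exact this a b (by simpa [triEdge, Sym2.eq_iff] using h)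

theorem hubEdge_injective : Function.Injective (hubEdge t) := by
  intro w w' h
  simpa [hubEdge, Sym2.eq_iff] using h

theorem exists_mem_triEdge_and_mem_triEdge (a b : Fin 3) :
    ∃ v ∈ triEdge t a, v ∈ triEdge t b := by
  have : ∀ a b : Fin 3, a = b ∨ a = b + 1 ∨ a + 1 = b ∨ a + 1 = b + 1 := by decide
  rcases this a b with h | h | h | h
  · exact ⟨some (inl a), by simp [triEdge, h]⟩
  · exact ⟨some (inl a), by simp [triEdge, h]⟩
  · exact ⟨some (inl (a + 1)), by simp [triEdge, h]⟩
  · exact ⟨some (inl (a + 1)), by simp [triEdge, h]⟩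

theorem disjoint_triEdge_hubEdge_iff {a : Fin 3} {w : Fin 3 ⊕ Fin t} :
    (∀ v ∈ triEdge t a, v ∉ hubEdge t w) ↔ w ≠ inl a ∧ w ≠ inl (a + 1) := by
  simp [triEdge, hubEdge, eq_comm]

theorem adj_some_some {v w : Fin 3 ⊕ Fin t} :
    (LGraph t ℓ).Adj (some v) (some w) ↔ ∃ a b : Fin 3, a ≠ b ∧ v = inl a ∧ w = inl b := by
  simp only [LGraph, fromRel_adj, ne_eq, Option.some.injEq, reduceCtorEq, false_and,
    exists_false, and_false, or_false]
  constructor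
  · rintro ⟨-, h | ⟨a, b, hab, rfl, rfl⟩⟩
    · exact h
    · exact ⟨b, a, Ne.symm hab, rfl, rfl⟩
  · rintro ⟨a, b, hab, rfl, rfl⟩
    exact ⟨by simpa using hab, Or.inl ⟨a, b, hab, rfl, rfl⟩⟩

theorem adj_none_inl {a : Fin 3} : (LGraph t ℓ).Adj none (some (inl a)) ↔ (a : ℕ) < ℓ := by
  simp [LGraph]

theorem adj_none_inr (i : Fin t) : (LGraph t ℓ).Adj none (some (inr i)) := by
  simp [LGraph]

theorem triEdge_mem_edgeSet (a : Fin 3) : triEdge t a ∈ (LGraph t ℓ).edgeSet := by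
  have : ∀ a : Fin 3, a ≠ a + 1 := by decide
  exact adj_some_some.2 ⟨a, a + 1, this a, rfl, rfl⟩

theorem mem_edgeSet_cases {e : Sym2 (Option (Fin 3 ⊕ Fin t))} (he : e ∈ (LGraph t ℓ).edgeSet) :
    (∃ a, e = triEdge t a) ∨ ∃ w, (LGraph t ℓ).Adj none (some w) ∧ e = hubEdge t w := by
  induction e with | _ x y => ?_
  rw [mem_edgeSet] at he
  rcases x with _ | v <;> rcases y with _ | w
  · exact absurd he ((LGraph t ℓ).loopless.irrefl _)
  · exact Or.inr ⟨w, he, rfl⟩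
  · exact Or.inr ⟨v, he.symm, Sym2.eq_swap⟩
  · obtain ⟨a, b, hab, rfl, rfl⟩ := adj_some_some.1 he
    have : ∀ a b : Fin 3, a ≠ b → b = a + 1 ∨ a = b + 1 := by decide
    rcases this a b hab with rfl | rfl
    · exact Or.inl ⟨a, rfl⟩
    · exact Or.inl ⟨b, Sym2.eq_swap⟩

theorem card_le_two_of_isMatchingFinset {s : Finset (Sym2 (Option (Fin 3 ⊕ Fin t)))}
    (hs : (LGraph t ℓ).IsMatchingFinset s) : s.card ≤ 2 := by
  classical
  -- two hub edges meet in the hub, two triangle edges meet in the triangle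
  refine (Finset.card_le_card_of_injOn (fun e => decide (none ∈ e)) (t := Finset.univ)
    (fun _ _ => Finset.mem_univ _) ?_).trans_eq rfl
  intro e he f hf hef
  by_contra hne
  have hdisj := hs.2 he hf hne
  rcases mem_edgeSet_cases (hs.1 he) with ⟨a, rfl⟩ | ⟨w, -, rfl⟩ <;>
    rcases mem_edgeSet_cases (hs.1 hf) with ⟨b, rfl⟩ | ⟨w', -, rfl⟩
  · obtain ⟨v, hva, hvb⟩ := exists_mem_triEdge_and_mem_triEdge (t := t) a b
    exact hdisj v hva hvb
  · simp [none_notMem_triEdge, none_mem_hubEdge] at hef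
  · simp [none_notMem_triEdge, none_mem_hubEdge] at hef
  · exact hdisj none (none_mem_hubEdge _) (none_mem_hubEdge _)

def edgeOf (t : ℕ) (h3 : ℓ ≤ 3) : Fin 3 ⊕ Fin ℓ ⊕ Fin t → Sym2 (Option (Fin 3 ⊕ Fin t))
  | inl a => triEdge t a
  | inr (inl b) => hubEdge t (inl (Fin.castLE h3 b))
  | inr (inr i) => hubEdge t (inr i)

theorem edgeOf_injective (h3 : ℓ ≤ 3) : Function.Injective (edgeOf t h3) := by
  rintro (a | b | i) (a' | b' | i') h <;>
    simp only [edgeOf] at h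
  all_goals first
    | exact absurd h (triEdge_ne_hubEdge _ _)
    | exact absurd h.symm (triEdge_ne_hubEdge _ _)
    | rw [triEdge_injective h]
    | simpa [Fin.castLE_inj] using hubEdge_injective h

theorem edgeSet_eq_range_edgeOf (h3 : ℓ ≤ 3) :
    (LGraph t ℓ).edgeSet = Set.range (edgeOf t h3) := by
  ext e
  constructor
  · intro he
    rcases mem_edgeSet_cases he with ⟨a, rfl⟩ | ⟨a | i, hw, rfl⟩
    · exact ⟨inl a, rfl⟩
    · exact ⟨inr (inl ⟨a, adj_none_inl.1 hw⟩), rfl⟩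
    · exact ⟨inr (inr i), rfl⟩
  · rintro ⟨a | b | i, rfl⟩
    · exact triEdge_mem_edgeSet a
    · exact adj_none_inl.2 b.isLt
    · exact adj_none_inr i

theorem ncard_edgeSet (h3 : ℓ ≤ 3) : (LGraph t ℓ).edgeSet.ncard = t + ℓ + 3 := by
  rw [edgeSet_eq_range_edgeOf h3, Set.ncard_range_of_injective (edgeOf_injective h3)]
  simp only [Nat.card_eq_fintype_card, Fintype.card_sum, Fintype.card_fin]
  omega

-- `inl b` is the hub edge to triangle vertex `b` with the opposite triangle edge,
-- `inr (a, i)` is the triangle edge `a` with the hub edge to the pendant vertex `i`.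
def twoMatching (t : ℕ) (h3 : ℓ ≤ 3) :
    Fin ℓ ⊕ Fin 3 × Fin t → Finset (Sym2 (Option (Fin 3 ⊕ Fin t)))
  | inl b => {triEdge t (Fin.castLE h3 b + 1), hubEdge t (inl (Fin.castLE h3 b))}
  | inr (a, i) => {triEdge t a, hubEdge t (inr i)}

theorem eq_and_eq_of_pair_triEdge_hubEdge_eq {a a' : Fin 3} {w w' : Fin 3 ⊕ Fin t}
    (h : ({triEdge t a, hubEdge t w} : Finset _) = {triEdge t a', hubEdge t w'}) :
    a = a' ∧ w = w' := by
  have ha : triEdge t a ∈ ({triEdge t a', hubEdge t w'} : Finset _) := h ▸ by simp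
  have hw : hubEdge t w ∈ ({triEdge t a', hubEdge t w'} : Finset _) := h ▸ by simp
  have hne : ∀ a w, hubEdge t w ≠ triEdge t a := fun a w => (triEdge_ne_hubEdge a w).symm
  simp only [Finset.mem_insert, Finset.mem_singleton, triEdge_ne_hubEdge, hne, or_false,
    false_or] at ha hw
  exact ⟨triEdge_injective ha, hubEdge_injective hw⟩

theorem twoMatching_injective (h3 : ℓ ≤ 3) : Function.Injective (twoMatching t h3) := by
  rintro (b | ⟨a, i⟩) (b' | ⟨a', i'⟩) h <;>
    obtain ⟨ha, hw⟩ := eq_and_eq_of_pair_triEdge_hubEdge_eq h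
  · simpa [Fin.castLE_inj] using hw
  · simp at hw
  · simp at hw
  · simp_all

theorem twoMatching_isMatchingFinset (h3 : ℓ ≤ 3) (j : Fin ℓ ⊕ Fin 3 × Fin t) :
    (LGraph t ℓ).IsMatchingFinset (twoMatching t h3 j) := by
  rcases j with b | ⟨a, i⟩
  · have : ∀ c : Fin 3, c ≠ c + 1 ∧ c ≠ c + 1 + 1 := by decide
    refine ((LGraph t ℓ).isMatchingFinset_pair (triEdge_ne_hubEdge _ _)).2
      ⟨triEdge_mem_edgeSet _, adj_none_inl.2 b.isLt, disjoint_triEdge_hubEdge_iff.2 ?_⟩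
    simpa [eq_comm] using this (Fin.castLE h3 b)
  · exact ((LGraph t ℓ).isMatchingFinset_pair (triEdge_ne_hubEdge _ _)).2
      ⟨triEdge_mem_edgeSet _, adj_none_inr i, disjoint_triEdge_hubEdge_iff.2 (by simp)⟩

theorem pair_mem_range_twoMatching (h3 : ℓ ≤ 3) {a : Fin 3} {w : Fin 3 ⊕ Fin t}
    (hw : (LGraph t ℓ).Adj none (some w)) (hdisj : ∀ v ∈ triEdge t a, v ∉ hubEdge t w) :
    {triEdge t a, hubEdge t w} ∈ Set.range (twoMatching t h3) := by
  obtain ⟨hwa, hwa'⟩ := disjoint_triEdge_hubEdge_iff.1 hdisj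
  rcases w with b | i
  · have : ∀ a b : Fin 3, b ≠ a → b ≠ a + 1 → a = b + 1 := by decide
    obtain rfl := this a b (by simpa using hwa) (by simpa using hwa')
    exact ⟨inl ⟨b, adj_none_inl.1 hw⟩, rfl⟩
  · exact ⟨inr (a, i), rfl⟩

theorem setOf_twoMatchings_eq_range_twoMatching (h3 : ℓ ≤ 3) :
    {s | s.card = 2 ∧ (LGraph t ℓ).IsMatchingFinset s} = Set.range (twoMatching t h3) := by
  classical
  ext s
  constructor
  · rintro ⟨hs2, hs⟩
    obtain ⟨e, f, hef, rfl⟩ := Finset.card_eq_two.1 hs2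
    obtain ⟨he, hf, hdisj⟩ := ((LGraph t ℓ).isMatchingFinset_pair hef).1 hs
    rcases mem_edgeSet_cases he with ⟨a, rfl⟩ | ⟨w, hw, rfl⟩ <;>
      rcases mem_edgeSet_cases hf with ⟨b, rfl⟩ | ⟨w', hw', rfl⟩
    · obtain ⟨v, hva, hvb⟩ := exists_mem_triEdge_and_mem_triEdge (t := t) a b
      exact absurd hvb (hdisj v hva)
    · exact pair_mem_range_twoMatching h3 hw' hdisj
    · rw [Finset.pair_comm]
      exact pair_mem_range_twoMatching h3 hw fun v hvb hvw => hdisj v hvw hvb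
    · exact absurd (none_mem_hubEdge w') (hdisj none (none_mem_hubEdge w))
  · rintro ⟨j, rfl⟩
    refine ⟨?_, twoMatching_isMatchingFinset h3 j⟩
    rcases j with b | ⟨a, i⟩ <;> exact Finset.card_pair (triEdge_ne_hubEdge _ _)

theorem numMatchings_two (h3 : ℓ ≤ 3) : (LGraph t ℓ).numMatchings 2 = 3 * t + ℓ := by
  rw [numMatchings, setOf_twoMatchings_eq_range_twoMatching h3,
    Set.ncard_range_of_injective (twoMatching_injective h3)]
  simp only [Nat.card_eq_fintype_card, Fintype.card_sum, Fintype.card_prod, Fintype.card_fin]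
  omega

end LGraph

theorem matchingPolynomial_LGraph_general (t ℓ : ℕ) (hℓ3 : ℓ ≤ 3) :
    (LGraph t ℓ).matchingPolynomial =
      X ^ t * (X ^ 4 - C ((t : ℝ) + (ℓ : ℝ) + 3) * X ^ 2 + C (3 * (t : ℝ) + (ℓ : ℝ))) := by
  rw [SimpleGraph.matchingPolynomial_eq_of_card_le_two _
      (LGraph.card_vertices.symm ▸ by omega) fun _ => LGraph.card_le_two_of_isMatchingFinset,
    SimpleGraph.numMatchings_one, LGraph.ncard_edgeSet hℓ3, LGraph.numMatchings_two hℓ3,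
    LGraph.card_vertices, Nat.add_sub_cancel]
  push_cast
  ring

/-- The matching polynomial of `L(t,ℓ)` is `x^t (x⁴ - (t+ℓ+3)x² + 3t + ℓ)`. -/
theorem matchingPolynomial_LGraph (t ℓ : ℕ) (hℓ : 1 ≤ ℓ) (hℓ3 : ℓ ≤ 3) :
    (LGraph t ℓ).matchingPolynomial =
      X ^ t * (X ^ 4 - C ((t : ℝ) + (ℓ : ℝ) + 3) * X ^ 2 + C (3 * (t : ℝ) + (ℓ : ℝ))) :=
  matchingPolynomial_LGraph_general t ℓ hℓ3
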